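/- Let λ_E, λ_Is, λ_Ia > 0, β_Is, β_Ia ≥ 0, p_Is, p_Ia ∈ [0,1], and integer shape parameters k_E, k_Is, k_Ia ≥ 1, and let σ and δ be the associated m×m matrices. Then the matrix −δ·σ⁻¹ has all rows equal to zero except the first row, and its (1,1) entry equals β_Is·p_Is·k_Is/λ_Is + β_Ia·p_Ia·k_Ia/λ_Ia; consequently, the eigenvalues of −δ·σ⁻¹ are exactly β_Is·p_Is·k_Is/λ_Is + β_Ia·p_Ia·k_Ia/λ_Ia and 0. -/

import Mathlib

open Matrix Polynomial Kronecker

/-- The set of complex eigenvalues of a real square matrix: the roots of its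
characteristic polynomial over `ℂ`. -/
noncomputable def eigSet {n : Type*} [Fintype n] [DecidableEq n] (M : Matrix n n ℝ) : Set ℂ :=
  {z : ℂ | ((M.map (algebraMap ℝ ℂ)).charpoly).IsRoot z}

/-- The spectral bound `s(M)`: the maximum real part of the eigenvalues. -/
noncomputable def specBound {n : Type*} [Fintype n] [DecidableEq n] (M : Matrix n n ℝ) : ℝ :=
  sSup (Complex.re '' eigSet M)

/-- The spectral radius `ρ(M)`: the maximum modulus of the eigenvalues. -/
noncomputable def specRadius {n : Type*} [Fintype n] [DecidableEq n] (M : Matrix n n ℝ) : ℝ :=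
  sSup ((fun (z : ℂ) => ‖z‖) '' eigSet M)

/-- `H_k`: `-1` on the diagonal, `1` on the first subdiagonal, `0` elsewhere. -/
def Hmat (k : ℕ) : Matrix (Fin k) (Fin k) ℝ :=
  Matrix.of fun i j => if (i : ℕ) = (j : ℕ) then -1 else if (i : ℕ) = (j : ℕ) + 1 then 1 else 0

/-- `F_k`: lower triangular matrix with all entries on and below the diagonal equal to `1`. -/
def Fmat (k : ℕ) : Matrix (Fin k) (Fin k) ℝ :=
  Matrix.of fun i j => if (j : ℕ) ≤ (i : ℕ) then 1 else 0

/-- `G_{k₁,k₂}`: `1` in the upper-right corner, `0` elsewhere. -/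
def Gmat (k1 k2 : ℕ) : Matrix (Fin k1) (Fin k2) ℝ :=
  Matrix.of fun i j => if (i : ℕ) = 0 ∧ (j : ℕ) = k2 - 1 then 1 else 0

/-- `J_{k₁,k₂}`: the all-ones matrix. -/
def Jmat (k1 k2 : ℕ) : Matrix (Fin k1) (Fin k2) ℝ :=
  Matrix.of fun _ _ => 1

/-- The block matrix σ with row/column blocks of sizes `(k_E, k_Is, k_Ia)`:
`σ = [[λ_E·H_{k_E}, 0, 0], [p_Is·λ_E·G_{k_Is,k_E}, λ_Is·H_{k_Is}, 0],
      [p_Ia·λ_E·G_{k_Ia,k_E}, 0, λ_Ia·H_{k_Ia}]]`. -/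
noncomputable def sigmaMat (lE lIs lIa pIs pIa : ℝ) (kE kIs kIa : ℕ) :
    Matrix (Fin kE ⊕ (Fin kIs ⊕ Fin kIa)) (Fin kE ⊕ (Fin kIs ⊕ Fin kIa)) ℝ :=
  Matrix.fromBlocks (lE • Hmat kE) 0
    (Matrix.fromRows ((pIs * lE) • Gmat kIs kE) ((pIa * lE) • Gmat kIa kE))
    (Matrix.fromBlocks (lIs • Hmat kIs) 0 0 (lIa • Hmat kIa))

/-- The matrix δ: its first row is `(0,…,0, β_Is,…,β_Is, β_Ia,…,β_Ia)` (with `k_E` zeros,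
`k_Is` copies of `β_Is`, `k_Ia` copies of `β_Ia`), and all other rows are zero. -/
def deltaMat (bIs bIa : ℝ) (kE kIs kIa : ℕ) :
    Matrix (Fin kE ⊕ (Fin kIs ⊕ Fin kIa)) (Fin kE ⊕ (Fin kIs ⊕ Fin kIa)) ℝ :=
  Matrix.of fun i j =>
    Sum.elim
      (fun i1 : Fin kE =>
        if (i1 : ℕ) = 0 then
          Sum.elim (fun _ : Fin kE => (0 : ℝ))
            (Sum.elim (fun _ : Fin kIs => bIs) (fun _ : Fin kIa => bIa)) j
        else 0)
      (fun _ => 0) i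

/-!
The matrix `δ = e₁ bᵀ` has rank one, so `-δσ⁻¹ = e₁ wᵀ` where `w` solves `wᵀσ = -bᵀ`; only the
first row survives. Since `σ` is block lower triangular with bidiagonal diagonal blocks, `w` can
be written down: on an infectious chain of `k` Erlang stages with rate `λ` and infectivity `β`,
`w_j = β (k - j) / λ` is `β` times the expected remaining infectious time, and on the exposed
chain `w` is the constant `R = β_Is p_Is k_Is / λ_Is + β_Ia p_Ia k_Ia / λ_Ia`. Finally a rank-one
matrix `u vᵀ` of size `n` has characteristic polynomial `X^(n-1) (X - v ⬝ u)`, whose roots are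
`v ⬝ u = R` and `0`.
-/

lemma vecMul_Hmat_apply {k : ℕ} (f : Fin k → ℝ) (j : Fin k) :
    (f ᵥ* Hmat k) j = (if h : (j : ℕ) + 1 < k then f ⟨j + 1, h⟩ else 0) - f j := by
  have hH : ∀ i : Fin k, Hmat k i j =
      (if h : (j : ℕ) + 1 < k then (Pi.single (⟨j + 1, h⟩ : Fin k) (1 : ℝ) : Fin k → ℝ) i else 0)
        - (Pi.single j (1 : ℝ) : Fin k → ℝ) i := by
    intro i
    simp only [Hmat, of_apply, Pi.single_apply, Fin.ext_iff]
    split_ifs <;> first | omega | simp_all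
  simp only [vecMul, dotProduct, hH, mul_sub, Finset.sum_sub_distrib, mul_dite, mul_zero]
  split_ifs <;> simp [Pi.single_apply]

lemma const_vecMul_Hmat (k : ℕ) (c : ℝ) :
    (fun _ => c) ᵥ* Hmat k = fun j : Fin k => if (j : ℕ) = k - 1 then -c else 0 := by
  ext j
  rw [vecMul_Hmat_apply]
  split_ifs <;> first | omega | ring

lemma det_Hmat (k : ℕ) : (Hmat k).det = (-1) ^ k := by
  rw [det_of_isLowerTriangular _ fun i j hij => ?_]
  · simp [Hmat]
  · rw [OrderDual.toDual_lt_toDual, Fin.lt_def] at hij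
    simp only [Hmat, of_apply]
    split_ifs <;> first | rfl | omega

lemma vecMul_Gmat_apply {k1 k2 : ℕ} (hk1 : 0 < k1) (f : Fin k1 → ℝ) (j : Fin k2) :
    (f ᵥ* Gmat k1 k2) j = if (j : ℕ) = k2 - 1 then f ⟨0, hk1⟩ else 0 := by
  have hG : ∀ i : Fin k1, Gmat k1 k2 i j =
      if (j : ℕ) = k2 - 1 then (Pi.single (⟨0, hk1⟩ : Fin k1) (1 : ℝ) : Fin k1 → ℝ) i else 0 := by
    intro i
    simp only [Gmat, of_apply, Pi.single_apply, Fin.ext_iff]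
    split_ifs <;> first | omega | simp_all
  simp only [vecMul, dotProduct, hG, mul_ite, mul_zero]
  split_ifs <;> simp [Pi.single_apply]

def remainingStages (k : ℕ) : Fin k → ℝ := fun j => (k : ℝ) - j

lemma remainingStages_vecMul_Hmat (k : ℕ) : remainingStages k ᵥ* Hmat k = -1 := by
  ext j
  rw [vecMul_Hmat_apply]
  split_ifs with h
  · simp only [remainingStages, Pi.neg_apply, Pi.one_apply]
    push_cast
    ring
  · have hk : (k : ℝ) = j + 1 := by exact_mod_cast (show k = j + 1 by omega)
    simp only [remainingStages, Pi.neg_apply, Pi.one_apply, hk]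
    ring

lemma remainingStages_vecMul_Gmat {k1 : ℕ} (hk1 : 0 < k1) (k2 : ℕ) :
    remainingStages k1 ᵥ* Gmat k1 k2 =
      fun j : Fin k2 => if (j : ℕ) = k2 - 1 then (k1 : ℝ) else 0 := by
  ext j
  simp [vecMul_Gmat_apply hk1, remainingStages]

lemma eigSet_vecMulVec {n : Type*} [Fintype n] [DecidableEq n] (hn : 1 < Fintype.card n)
    (u v : n → ℝ) : eigSet (vecMulVec u v) = {((u ⬝ᵥ v : ℝ) : ℂ), 0} := by
  have hmap : (vecMulVec u v).map (algebraMap ℝ ℂ) =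
      vecMulVec (algebraMap ℝ ℂ ∘ u) (algebraMap ℝ ℂ ∘ v) := by
    ext
    simp [vecMulVec_apply]
  have hcharpoly : ((vecMulVec u v).map (algebraMap ℝ ℂ)).charpoly =
      X ^ (Fintype.card n - 1) * (X - C ((u ⬝ᵥ v : ℝ) : ℂ)) := by
    rw [hmap, charpoly_vecMulVec, ← RingHom.map_dotProduct, smul_eq_C_mul, mul_sub,
      ← pow_succ, Nat.sub_add_cancel hn.le, mul_comm]
    rfl
  ext z
  rw [eigSet, Set.mem_ofPred_eq, hcharpoly]
  simp [sub_eq_zero, Nat.sub_ne_zero_of_lt hn, or_comm]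

def transmissionRow (bIs bIa : ℝ) (kE kIs kIa : ℕ) : Fin kE ⊕ (Fin kIs ⊕ Fin kIa) → ℝ :=
  Sum.elim (fun _ => 0) (Sum.elim (fun _ => bIs) (fun _ => bIa))

noncomputable def nextGenerationRow (lIs lIa bIs bIa pIs pIa : ℝ) (kE kIs kIa : ℕ) :
    Fin kE ⊕ (Fin kIs ⊕ Fin kIa) → ℝ :=
  Sum.elim (fun _ => bIs * pIs * kIs / lIs + bIa * pIa * kIa / lIa)
    (Sum.elim ((bIs / lIs) • remainingStages kIs) ((bIa / lIa) • remainingStages kIa))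

section NextGeneration

variable {lE lIs lIa bIs bIa pIs pIa : ℝ} {kE kIs kIa : ℕ}

lemma isUnit_det_sigmaMat (hlE : lE ≠ 0) (hlIs : lIs ≠ 0) (hlIa : lIa ≠ 0) :
    IsUnit (sigmaMat lE lIs lIa pIs pIa kE kIs kIa).det := by
  simp [sigmaMat, det_fromBlocks_zero₁₂, det_Hmat, hlE, hlIs, hlIa]

lemma deltaMat_eq_vecMulVec (hkE : 0 < kE) :
    deltaMat bIs bIa kE kIs kIa =
      vecMulVec (Pi.single (Sum.inl ⟨0, hkE⟩) 1) (transmissionRow bIs bIa kE kIs kIa) := by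
  ext (i | i) j
  · by_cases hi : (i : ℕ) = 0
    · simp [deltaMat, vecMulVec_apply, transmissionRow, hi, Pi.single_apply, Fin.ext_iff]
    · simp [deltaMat, vecMulVec_apply, hi, Fin.ext_iff]
  · simp [deltaMat, vecMulVec_apply]

lemma nextGenerationRow_vecMul_sigmaMat (hkIs : 0 < kIs) (hkIa : 0 < kIa) (hlIs : lIs ≠ 0)
    (hlIa : lIa ≠ 0) :
    nextGenerationRow lIs lIa bIs bIa pIs pIa kE kIs kIa ᵥ* sigmaMat lE lIs lIa pIs pIa kE kIs kIa =
      -transmissionRow bIs bIa kE kIs kIa := by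
  simp only [sigmaMat, nextGenerationRow, transmissionRow, vecMul_fromBlocks, vecMul_fromRows,
    vecMul_smul, smul_vecMul, Sum.elim_comp_inl, Sum.elim_comp_inr, vecMul_zero, zero_add,
    add_zero, const_vecMul_Hmat, remainingStages_vecMul_Hmat, remainingStages_vecMul_Gmat hkIs,
    remainingStages_vecMul_Gmat hkIa]
  ext (j | j | j)
  · simp only [Sum.elim_inl, Pi.add_apply, Pi.smul_apply, Pi.neg_apply, smul_eq_mul]
    split_ifs <;> ring
  · simp only [Sum.elim_inr, Sum.elim_inl, Pi.smul_apply, Pi.neg_apply, Pi.one_apply, smul_eq_mul]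
    field_simp
  · simp only [Sum.elim_inr, Pi.smul_apply, Pi.neg_apply, Pi.one_apply, smul_eq_mul]
    field_simp

lemma neg_deltaMat_mul_inv_sigmaMat (hlE : lE ≠ 0) (hlIs : lIs ≠ 0) (hlIa : lIa ≠ 0)
    (hkE : 0 < kE) (hkIs : 0 < kIs) (hkIa : 0 < kIa) :
    -(deltaMat bIs bIa kE kIs kIa * (sigmaMat lE lIs lIa pIs pIa kE kIs kIa)⁻¹) =
      vecMulVec (Pi.single (Sum.inl ⟨0, hkE⟩) 1)
        (nextGenerationRow lIs lIa bIs bIa pIs pIa kE kIs kIa) := by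
  rw [deltaMat_eq_vecMulVec hkE, vecMulVec_mul, ← vecMulVec_neg, ← neg_vecMul,
    ← nextGenerationRow_vecMul_sigmaMat (lE := lE) (pIs := pIs) (pIa := pIa) hkIs hkIa hlIs hlIa,
    vecMul_vecMul, mul_nonsing_inv _ (isUnit_det_sigmaMat hlE hlIs hlIa), vecMul_one]

end NextGeneration

theorem stmt7_general (lE lIs lIa : ℝ) (hlE : 0 < lE) (hlIs : 0 < lIs) (hlIa : 0 < lIa)
    (bIs bIa : ℝ)
    (pIs pIa : ℝ)
    (kE kIs kIa : ℕ) (hkE : 1 ≤ kE) (hkIs : 1 ≤ kIs) (hkIa : 1 ≤ kIa) :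
    (∀ i, i ≠ Sum.inl (⟨0, hkE⟩ : Fin kE) →
      ∀ j, (-(deltaMat bIs bIa kE kIs kIa *
        (sigmaMat lE lIs lIa pIs pIa kE kIs kIa)⁻¹)) i j = 0) ∧
    (-(deltaMat bIs bIa kE kIs kIa * (sigmaMat lE lIs lIa pIs pIa kE kIs kIa)⁻¹))
        (Sum.inl (⟨0, hkE⟩ : Fin kE)) (Sum.inl (⟨0, hkE⟩ : Fin kE)) =
      bIs * pIs * (kIs : ℝ) / lIs + bIa * pIa * (kIa : ℝ) / lIa ∧
    eigSet (-(deltaMat bIs bIa kE kIs kIa * (sigmaMat lE lIs lIa pIs pIa kE kIs kIa)⁻¹)) =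
      {((bIs * pIs * (kIs : ℝ) / lIs + bIa * pIa * (kIa : ℝ) / lIa : ℝ) : ℂ), 0} := by
  rw [neg_deltaMat_mul_inv_sigmaMat hlE.ne' hlIs.ne' hlIa.ne' hkE hkIs hkIa]
  have hcard : 1 < Fintype.card (Fin kE ⊕ (Fin kIs ⊕ Fin kIa)) := by
    simp only [Fintype.card_sum, Fintype.card_fin]
    omega
  refine ⟨fun i hi j => ?_, ?_, ?_⟩
  · rw [vecMulVec_apply, Pi.single_eq_of_ne hi, zero_mul]
  · simp [vecMulVec_apply, nextGenerationRow]
  · rw [eigSet_vecMulVec hcard, single_one_dotProduct]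
    rfl

/-- The matrix `-δ·σ⁻¹` has all rows other than the first equal to zero,
its `(1,1)` entry equals `β_Is·p_Is·k_Is/λ_Is + β_Ia·p_Ia·k_Ia/λ_Ia`, and its eigenvalues
are exactly this quantity and `0`. -/
theorem stmt7 (lE lIs lIa : ℝ) (hlE : 0 < lE) (hlIs : 0 < lIs) (hlIa : 0 < lIa)
    (bIs bIa : ℝ) (hbIs : 0 ≤ bIs) (hbIa : 0 ≤ bIa)
    (pIs pIa : ℝ) (hpIs : pIs ∈ Set.Icc (0 : ℝ) 1) (hpIa : pIa ∈ Set.Icc (0 : ℝ) 1)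
    (kE kIs kIa : ℕ) (hkE : 1 ≤ kE) (hkIs : 1 ≤ kIs) (hkIa : 1 ≤ kIa) :
    (∀ i, i ≠ Sum.inl (⟨0, hkE⟩ : Fin kE) →
      ∀ j, (-(deltaMat bIs bIa kE kIs kIa *
        (sigmaMat lE lIs lIa pIs pIa kE kIs kIa)⁻¹)) i j = 0) ∧
    (-(deltaMat bIs bIa kE kIs kIa * (sigmaMat lE lIs lIa pIs pIa kE kIs kIa)⁻¹))
        (Sum.inl (⟨0, hkE⟩ : Fin kE)) (Sum.inl (⟨0, hkE⟩ : Fin kE)) =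
      bIs * pIs * (kIs : ℝ) / lIs + bIa * pIa * (kIa : ℝ) / lIa ∧
    eigSet (-(deltaMat bIs bIa kE kIs kIa * (sigmaMat lE lIs lIa pIs pIa kE kIs kIa)⁻¹)) =
      {((bIs * pIs * (kIs : ℝ) / lIs + bIa * pIa * (kIa : ℝ) / lIa : ℝ) : ℂ), 0} :=
  stmt7_general lE lIs lIa hlE hlIs hlIa bIs bIa pIs pIa kE kIs kIa hkE hkIs hkIa
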